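/- arXiv:1907.05605 — 3 statements merged into one kernel-verified Lean document; each statement's English description precedes it below -/
import Mathlib

section
/- Let S be a nonempty finite set, let μ be a probability measure on F_S, and let F = (F_s : s ∈ ℕ) be an i.i.d. sequence with law μ. Then the coalescence number k(F) is almost surely constant: there exists an integer k* such that μ̄(k(F) = k*) = 1, where μ̄ is the product measure giving the joint law of F. -/
open MeasureTheory

namespace CFTP

variable {S : Type*}

/-- Forward composition `f_t ∘ f_{t-1} ∘ ⋯ ∘ f_1` (functions are indexed by 1,2,…). -/
def fwd (f : ℕ → S → S) : ℕ → S → S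
  | 0 => id
  | t + 1 => f (t + 1) ∘ fwd f t

/-- Backward composition `f_1 ∘ f_2 ∘ ⋯ ∘ f_t`. -/
def bwd (f : ℕ → S → S) : ℕ → S → S
  | 0 => id
  | t + 1 => bwd f t ∘ f (t + 1)

/-- `k_t(f⃗)`: the number of equivalence classes of `i ~ j ↔ f⃗_t i = f⃗_t j`,
i.e. the cardinality of the image of the forward composition. -/
noncomputable def ktF (f : ℕ → S → S) (t : ℕ) : ℕ := Set.ncard (Set.range (fwd f t))

/-- `k_t(f⃖)`: the cardinality of the image of the backward composition. -/
noncomputable def ktB (f : ℕ → S → S) (t : ℕ) : ℕ := Set.ncard (Set.range (bwd f t))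

/-- `k(f⃗)`: the eventual (= minimal) value of the non-increasing sequence `k_t(f⃗)`. -/
noncomputable def kF (f : ℕ → S → S) : ℕ := ⨅ t, ktF f t

/-- `k(f⃖)`. -/
noncomputable def kB (f : ℕ → S → S) : ℕ := ⨅ t, ktB f t

/-- `μbar` is the joint law of an i.i.d. sequence with one-step law `ν`,
i.e. the countable product measure `∏_{s ∈ ℕ} ν`, characterised by its
values on cylinder events. -/
def IsIID [MeasurableSpace S] (ν : Measure (S → S)) (μbar : Measure (ℕ → S → S)) : Prop :=
  ∀ (I : Finset ℕ) (g : ℕ → S → S),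
    μbar {F | ∀ s ∈ I, F s = g s} = ∏ s ∈ I, ν {g s}

/-- The support of a probability measure on the finite set `F_S`. -/
def supp [MeasurableSpace S] (ν : Measure (S → S)) : Set (S → S) := {f | 0 < ν {f}}

/-- A stochastic matrix: nonnegative entries, row sums one. -/
def IsStochastic [Fintype S] (P : S → S → ℝ) : Prop :=
  (∀ i j, 0 ≤ P i j) ∧ ∀ i, ∑ j, P i j = 1

/-- `ν ∈ L(P)`: the measure `ν` on `F_S` is consistent with the matrix `P`. -/
def Consistent [Fintype S] [MeasurableSpace S] (P : S → S → ℝ) (ν : Measure (S → S)) : Prop :=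
  ∀ i j, ν {f : S → S | f i = j} = ENNReal.ofReal (P i j)

/-- Irreducibility: for all `i j` some power of `P` has positive `(i,j)` entry. -/
def Irred [Fintype S] [DecidableEq S] (P : S → S → ℝ) : Prop :=
  ∀ i j, ∃ t, 1 ≤ t ∧ 0 < ((Matrix.of P) ^ t) i j

/-- Aperiodicity: for each `i`, the gcd of `{t ≥ 1 : (P^t)_{i,i} > 0}` is `1`,
expressed as: every common divisor of that set equals `1`. -/
def Aperiodic [Fintype S] [DecidableEq S] (P : S → S → ℝ) : Prop :=
  ∀ i, ∀ d : ℕ, (∀ t, 1 ≤ t → 0 < ((Matrix.of P) ^ t) i i → d ∣ t) → d = 1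

/-- A function is constant. -/
def IsConst (g : S → S) : Prop := ∀ i j, g i = g j

/-- The backward coalescence time `C`. -/
noncomputable def Ctime (F : ℕ → S → S) : ℕ∞ :=
  sInf ((fun t : ℕ => (t : ℕ∞)) '' {t : ℕ | 1 ≤ t ∧ IsConst (bwd F t)})

/-- The forward coalescence time `T`. -/
noncomputable def Ttime (F : ℕ → S → S) : ℕ∞ :=
  sInf ((fun t : ℕ => (t : ℕ∞)) '' {t : ℕ | 1 ≤ t ∧ IsConst (fwd F t)})

/-- The 0-1 matrix `M_f`. -/
noncomputable def Mmat [Fintype S] [DecidableEq S] (f : S → S) : Matrix S S ℝ :=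
  Matrix.of fun i j => if f i = j then 1 else 0

/-- The product `M_{f_t} M_{f_{t-1}} ⋯ M_{f_1}`. -/
noncomputable def Mprod [Fintype S] [DecidableEq S] (f : ℕ → S → S) : ℕ → Matrix S S ℝ
  | 0 => 1
  | t + 1 => Mmat (f (t + 1)) * Mprod f t

/-- The event that states `i` and `j` coalesce. -/
def coalEvent (i j : S) : Set (ℕ → S → S) := {F | ∃ t, 1 ≤ t ∧ fwd F t i = fwd F t j}

/-! Almost surely every `F s` lies in the support of `ν`, so `k(F)` is at least the least value
`k* = k(g)` of `k` over such sequences, attained at some `g` with `k_t(g) = k*`. The block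
`g 1, …, g t` has positive probability and disjoint blocks of coordinates are independent, so
almost surely some block `F (n t + 1), …, F (n t + t)` equals it, and then `k(F) ≤ k_t(g) = k*`. -/

open ProbabilityTheory Finset

section Composition

lemma fwd_congr {f g : ℕ → S → S} {t : ℕ} (h : ∀ s, 1 ≤ s → s ≤ t → f s = g s) :
    fwd f t = fwd g t := by
  induction t with
  | zero => rfl
  | succ t ih =>
    change f (t + 1) ∘ fwd f t = g (t + 1) ∘ fwd g t
    rw [h (t + 1) (by omega) le_rfl, ih fun s h1 h2 => h s h1 (by omega)]

lemma fwd_add (f : ℕ → S → S) (n t : ℕ) :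
    fwd f (n + t) = fwd (fun s => f (n + s)) t ∘ fwd f n := by
  induction t with
  | zero => rfl
  | succ t ih =>
    change f (n + t + 1) ∘ fwd f (n + t) = f (n + (t + 1)) ∘ fwd (fun s => f (n + s)) t ∘ fwd f n
    rw [ih]
    rfl

lemma kF_le_ktF (f : ℕ → S → S) (t : ℕ) : kF f ≤ ktF f t :=
  ciInf_le (OrderBot.bddBelow _) t

lemma kF_le_ktF_of_block_eq [Finite S] {F g : ℕ → S → S} {n t : ℕ}
    (h : ∀ s ∈ Icc 1 t, F (n + s) = g s) : kF F ≤ ktF g t := by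
  have hblock : fwd (fun s => F (n + s)) t = fwd g t :=
    fwd_congr fun s h1 h2 => h s (mem_Icc.2 ⟨h1, h2⟩)
  calc kF F ≤ ktF F (n + t) := kF_le_ktF F _
    _ ≤ ktF g t := by
      rw [ktF, ktF, fwd_add, hblock, Set.range_comp]
      exact Set.ncard_le_ncard (Set.image_subset_range _ _) (Set.toFinite _)

end Composition

section Independence

variable {Ω β γ : Type*} [MeasurableSpace Ω] [MeasurableSpace β] [MeasurableSpace γ]

lemma indepFun_of_measure_inter_preimage_singleton [Countable β] [Countable γ]
    [MeasurableSingletonClass β] [MeasurableSingletonClass γ]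
    {μ : Measure Ω} [IsFiniteMeasure μ] {f : Ω → β} {g : Ω → γ}
    (hf : Measurable f) (hg : Measurable g)
    (h : ∀ b c, μ (f ⁻¹' {b} ∩ g ⁻¹' {c}) = μ (f ⁻¹' {b}) * μ (g ⁻¹' {c})) :
    IndepFun f g μ := by
  rw [indepFun_iff_map_prod_eq_prod_map_map hf.aemeasurable hg.aemeasurable,
    Measure.ext_iff_singleton]
  rintro ⟨b, c⟩
  rw [← Set.singleton_prod_singleton, Measure.prod_prod,
    Measure.map_apply (hf.prodMk hg) (.prod (.singleton b) (.singleton c)),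
    Measure.map_apply hf (.singleton b), Measure.map_apply hg (.singleton c), Set.mk_preimage_prod]
  exact h b c

lemma restrict_preimage_singleton_restrict {ι X : Type*} (J : Finset ι) (a : ι → X) :
    J.restrict ⁻¹' ({J.restrict a} : Set (J → X)) = {F | ∀ s ∈ J, F s = a s} := by
  ext F
  simp [funext_iff]

lemma preimage_image_restrict_of_dependsOn {ι X : Type*} {J : Finset ι} {B : Set (ι → X)}
    (hB : DependsOn (· ∈ B) J) : J.restrict ⁻¹' (J.restrict '' B) = B := by
  refine Set.Subset.antisymm ?_ (Set.subset_preimage_image _ _)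
  rintro F ⟨F', hF', hFF'⟩
  exact Eq.mp (hB fun s hs => congrFun hFF' ⟨s, hs⟩) hF'

lemma measurableSet_of_dependsOn {ι X : Type*} [MeasurableSpace X] [Countable X]
    [MeasurableSingletonClass X] {J : Finset ι} {B : Set (ι → X)} (hB : DependsOn (· ∈ B) J) :
    MeasurableSet B := by
  rw [← preimage_image_restrict_of_dependsOn hB]
  exact J.measurable_restrict .of_discrete

end Independence

section Blocks

def blockMatch (g : ℕ → S → S) (t n : ℕ) : Set (ℕ → S → S) :=
  {F | ∀ s ∈ Icc 1 t, F (n * t + s) = g s}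

lemma dependsOn_mem_blockMatch (g : ℕ → S → S) (t n : ℕ) :
    DependsOn (· ∈ blockMatch g t n) ↑(Ioc (n * t) (n * t + t)) := by
  intro F F' h
  refine propext (forall₂_congr fun s hs => ?_)
  rw [h (n * t + s) (by simp only [coe_Ioc, Set.mem_Ioc, mem_Icc] at hs ⊢; omega)]

lemma dependsOn_forall_notMem_blockMatch (g : ℕ → S → S) (t N : ℕ) :
    DependsOn (· ∈ {F | ∀ n < N, F ∉ blockMatch g t n}) ↑(Iic (N * t)) := by
  intro F F' h
  refine propext (forall₂_congr fun n hn => ?_)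
  have hblock : Ioc (n * t) (n * t + t) ⊆ Iic (N * t) := fun s hs => by
    have : n * t + t ≤ N * t := by nlinarith
    simp only [mem_Ioc, mem_Iic] at hs ⊢
    omega
  exact not_congr (iff_of_eq ((dependsOn_mem_blockMatch g t n).mono (coe_subset.2 hblock) h))

end Blocks

section IID

variable [MeasurableSpace S] {ν : Measure (S → S)} {μbar : Measure (ℕ → S → S)}

lemma IsIID.indepFun_restrict [Finite S] [DiscreteMeasurableSpace S] [IsFiniteMeasure μbar]
    (hiid : IsIID ν μbar) {J K : Finset ℕ} (hJK : Disjoint J K) :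
    IndepFun J.restrict K.restrict μbar := by
  classical
  refine indepFun_of_measure_inter_preimage_singleton J.measurable_restrict
    K.measurable_restrict fun u v => ?_
  obtain ⟨a, rfl⟩ : ∃ a : ℕ → S → S, J.restrict a = u :=
    ⟨fun s => if hs : s ∈ J then u ⟨s, hs⟩ else id, by ext ⟨s, hs⟩; simp [hs]⟩
  obtain ⟨b, rfl⟩ : ∃ b : ℕ → S → S, K.restrict b = v :=
    ⟨fun s => if hs : s ∈ K then v ⟨s, hs⟩ else id, by ext ⟨s, hs⟩; simp [hs]⟩
  have hinter : {F : ℕ → S → S | ∀ s ∈ J, F s = a s} ∩ {F | ∀ s ∈ K, F s = b s} =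
      {F | ∀ s ∈ J ∪ K, F s = J.piecewise a b s} := by
    ext F
    simp only [Set.mem_inter_iff, Set.mem_ofPred_eq, mem_union]
    constructor
    · rintro ⟨hJ, hK⟩ s (hs | hs)
      · rw [piecewise_eq_of_mem _ _ _ hs, hJ s hs]
      · rw [piecewise_eq_of_notMem _ _ _ (disjoint_right.1 hJK hs), hK s hs]
    · intro h
      refine ⟨fun s hs => ?_, fun s hs => ?_⟩
      · rw [h s (.inl hs), piecewise_eq_of_mem _ _ _ hs]
      · rw [h s (.inr hs), piecewise_eq_of_notMem _ _ _ (disjoint_right.1 hJK hs)]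
  simp only [restrict_preimage_singleton_restrict]
  rw [hinter, hiid, hiid, hiid, prod_union hJK]
  congr 1
  · exact prod_congr rfl fun s hs => by rw [piecewise_eq_of_mem _ _ _ hs]
  · exact prod_congr rfl fun s hs => by
      rw [piecewise_eq_of_notMem _ _ _ (disjoint_right.1 hJK hs)]

lemma IsIID.measure_inter_of_dependsOn [Finite S] [DiscreteMeasurableSpace S]
    [IsFiniteMeasure μbar] (hiid : IsIID ν μbar) {J K : Finset ℕ} (hJK : Disjoint J K)
    {B C : Set (ℕ → S → S)} (hB : DependsOn (· ∈ B) J) (hC : DependsOn (· ∈ C) K) :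
    μbar (B ∩ C) = μbar B * μbar C := by
  rw [← preimage_image_restrict_of_dependsOn hB, ← preimage_image_restrict_of_dependsOn hC]
  exact (hiid.indepFun_restrict hJK).measure_inter_preimage_eq_mul _ _
    .of_discrete .of_discrete

lemma IsIID.ae_mem_supp [Finite S] (hiid : IsIID ν μbar) : ∀ᵐ F ∂μbar, ∀ s, F s ∈ supp ν := by
  refine ae_all_iff.2 fun s => ae_iff.2 ?_
  have hcover : {F : ℕ → S → S | F s ∉ supp ν} ⊆
      ⋃ f ∈ (supp ν)ᶜ, {F | ∀ s' ∈ ({s} : Finset ℕ), F s' = f} :=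
    fun F hF => Set.mem_biUnion (x := F s) hF fun s' hs' => by rw [mem_singleton.1 hs']
  refine measure_mono_null hcover ((measure_biUnion_null_iff (Set.to_countable _)).2 fun f hf => ?_)
  rw [hiid, prod_singleton]
  simpa [supp, pos_iff_ne_zero] using hf

lemma IsIID.measure_blockMatch (hiid : IsIID ν μbar) (g : ℕ → S → S) (t n : ℕ) :
    μbar (blockMatch g t n) = ∏ s ∈ Icc 1 t, ν {g s} := by
  have hshift : blockMatch g t n =
      {F | ∀ s ∈ (Icc 1 t).map (addLeftEmbedding (n * t)), F s = g (s - n * t)} := by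
    ext F
    simp only [blockMatch, Set.mem_ofPred_eq, map_add_left_Icc, mem_Icc]
    constructor
    · rintro h s ⟨h1, h2⟩
      simpa [Nat.add_sub_cancel' (by omega : n * t ≤ s)] using h (s - n * t) ⟨by omega, by omega⟩
    · rintro h s ⟨h1, h2⟩
      simpa using h (n * t + s) ⟨by omega, by omega⟩
  rw [hshift, hiid, prod_map]
  simp

lemma IsIID.measure_forall_notMem_blockMatch_le [Finite S] [DiscreteMeasurableSpace S]
    [IsProbabilityMeasure μbar] (hiid : IsIID ν μbar) (g : ℕ → S → S) (t N : ℕ) :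
    μbar {F | ∀ n < N, F ∉ blockMatch g t n} ≤ (1 - ∏ s ∈ Icc 1 t, ν {g s}) ^ N := by
  set p := ∏ s ∈ Icc 1 t, ν {g s}
  induction N with
  | zero => simp
  | succ N ih =>
    set E := {F | ∀ n < N, F ∉ blockMatch g t n}
    have hE := dependsOn_forall_notMem_blockMatch g t N
    have hA := dependsOn_mem_blockMatch g t N
    have hdisj : Disjoint (Iic (N * t)) (Ioc (N * t) (N * t + t)) := by
      simp only [disjoint_left, mem_Iic, mem_Ioc]
      omega
    have hEA : μbar (E ∩ blockMatch g t N) = μbar E * p := by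
      rw [hiid.measure_inter_of_dependsOn hdisj hE hA, hiid.measure_blockMatch]
    have hsucc : {F | ∀ n < N + 1, F ∉ blockMatch g t n} = E \ blockMatch g t N := by
      ext F
      simp only [Set.mem_sdiff, Set.mem_ofPred_eq, Nat.lt_succ_iff_lt_or_eq, or_imp, forall_and,
        forall_eq, E]
    calc μbar {F | ∀ n < N + 1, F ∉ blockMatch g t n}
        = μbar E - μbar (E ∩ blockMatch g t N) := by
          rw [hsucc, ← Set.sdiff_inter_self_eq_sdiff, Set.inter_comm, measure_sdiff
            Set.inter_subset_left ((measurableSet_of_dependsOn hE).inter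
              (measurableSet_of_dependsOn hA)).nullMeasurableSet (measure_ne_top _ _)]
      _ = μbar E * (1 - p) := by rw [hEA, ENNReal.mul_sub fun _ _ => measure_ne_top _ _, mul_one]
      _ ≤ (1 - p) ^ (N + 1) := by rw [pow_succ]; gcongr

lemma IsIID.ae_exists_mem_blockMatch [Finite S] [DiscreteMeasurableSpace S]
    [IsProbabilityMeasure μbar] (hiid : IsIID ν μbar) {g : ℕ → S → S} {t : ℕ}
    (hg : ∀ s ∈ Icc 1 t, ν {g s} ≠ 0) :
    ∀ᵐ F ∂μbar, ∃ n, F ∈ blockMatch g t n := by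
  have hp : 1 - ∏ s ∈ Icc 1 t, ν {g s} < 1 :=
    ENNReal.sub_lt_self ENNReal.one_ne_top one_ne_zero (prod_ne_zero_iff.2 hg)
  refine ae_iff.2 (nonpos_iff_eq_zero.1 ?_)
  refine ge_of_tendsto' (ENNReal.tendsto_pow_atTop_nhds_zero_of_lt_one hp) fun N => ?_
  have hsub : {F | ¬ ∃ n, F ∈ blockMatch g t n} ⊆ {F | ∀ n < N, F ∉ blockMatch g t n} :=
    fun F hF n _ => not_exists.1 hF n
  exact (measure_mono hsub).trans (hiid.measure_forall_notMem_blockMatch_le g t N)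

end IID

theorem stmt3_general [Fintype S] [MeasurableSpace S] [DiscreteMeasurableSpace S]
    (ν : Measure (S → S))
    (μbar : Measure (ℕ → S → S)) [IsProbabilityMeasure μbar]
    (hiid : IsIID ν μbar) :
    ∃ kstar : ℕ, μbar {F | kF F = kstar} = 1 := by
  set G := {F : ℕ → S → S | ∀ s, F s ∈ supp ν}
  have hG : ∀ᵐ F ∂μbar, F ∈ G := hiid.ae_mem_supp
  have hG_ne : G.Nonempty := hG.exists
  set g := Function.argminOn kF G hG_ne
  have hgG : g ∈ G := Function.argminOn_mem kF G hG_ne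
  obtain ⟨t, ht⟩ : ∃ t, ktF g t = kF g := Nat.sInf_mem (Set.range_nonempty _)
  have hblock := hiid.ae_exists_mem_blockMatch (g := g) (t := t) fun s _ => (hgG s).ne'
  refine ⟨kF g, le_antisymm prob_le_one ?_⟩
  rw [← measure_univ (μ := μbar)]
  refine measure_mono_ae ?_
  filter_upwards [hG, hblock] with F hF ⟨n, hn⟩ _
  exact le_antisymm (ht ▸ kF_le_ktF_of_block_eq hn) (Function.argminOn_le kF G hF)

theorem stmt3 [Fintype S] [Nonempty S] [MeasurableSpace S] [DiscreteMeasurableSpace S]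
    (ν : Measure (S → S)) [IsProbabilityMeasure ν]
    (μbar : Measure (ℕ → S → S)) [IsProbabilityMeasure μbar]
    (hiid : IsIID ν μbar) :
    ∃ kstar : ℕ, μbar {F | kF F = kstar} = 1 :=
  stmt3_general ν μbar hiid

end CFTP
end

section
/- Let S be a finite set with |S| = n ≥ 2 and let k satisfy 1 ≤ k ≤ n. Then there exists an irreducible aperiodic stochastic matrix P on S such that k ∈ K(P), i.e. there exists a probability measure μ consistent with P with coalescence number k(μ) = k. -/
/-!
Fix a surjection `b : S → Fin k` and let `ν` be uniform on the maps `g ∘ b` for which `b ∘ g` is a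
permutation of `Fin k`. These maps are closed under composition and each has an image of exactly `k`
points, so every forward composition of an i.i.d. sequence of them has image size `k`. A section of
`b` twisted by a transposition gives such a map sending any `i` to any `j`, so the transition matrix
induced by `ν` has positive entries and is therefore irreducible and aperiodic.
-/

open MeasureTheory

namespace CFTP

variable {S : Type*}

section Transversal

variable {β : Type*}

def IsTransversalMap (b : S → β) (f : S → S) : Prop :=
  ∃ g : β → S, (b ∘ g).Bijective ∧ f = g ∘ b

variable {b : S → β}

theorem IsTransversalMap.comp {f h : S → S} (hh : IsTransversalMap b h)
    (hf : IsTransversalMap b f) : IsTransversalMap b (h ∘ f) := by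
  obtain ⟨g, hg, rfl⟩ := hf
  obtain ⟨g', hg', rfl⟩ := hh
  exact ⟨g' ∘ b ∘ g, hg'.comp hg, rfl⟩

theorem IsTransversalMap.ncard_range {f : S → S} (hf : IsTransversalMap b f) :
    (Set.range f).ncard = Nat.card β := by
  obtain ⟨g, hg, rfl⟩ := hf
  rw [hg.surjective.of_comp.range_comp, Set.ncard_range_of_injective hg.injective.of_comp]

theorem isTransversalMap_fwd {F : ℕ → S → S} (hF : ∀ t, IsTransversalMap b (F (t + 1))) :
    ∀ t, IsTransversalMap b (fwd F (t + 1))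
  | 0 => hF 0
  | t + 1 => (hF (t + 1)).comp (isTransversalMap_fwd hF t)

theorem kF_eq_card_of_isTransversalMap [Finite S] {F : ℕ → S → S}
    (hF : ∀ t, IsTransversalMap b (F (t + 1))) : kF F = Nat.card β := by
  have hpos : ∀ t, ktF F (t + 1) = Nat.card β := fun t =>
    (isTransversalMap_fwd hF t).ncard_range
  refine le_antisymm ((ciInf_le (OrderBot.bddBelow _) 1).trans_eq (hpos 0)) (le_ciInf ?_)
  rintro (_ | t)
  · calc Nat.card β = ktF F 1 := (hpos 0).symm
      _ ≤ ktF F 0 := Set.ncard_le_ncard fun x _ => ⟨x, rfl⟩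
  · exact (hpos t).ge

theorem exists_isTransversalMap_apply_eq [DecidableEq β] (hb : b.Surjective) (i j : S) :
    ∃ f, IsTransversalMap b f ∧ f i = j := by
  let g := Function.update (Function.surjInv hb ∘ Equiv.swap (b i) (b j)) (b i) j
  have hbg : b ∘ g = Equiv.swap (b i) (b j) := by
    funext x
    by_cases hx : x = b i
    · subst hx
      simp [g]
    · simp [g, hx, Function.surjInv_eq hb]
  exact ⟨g ∘ b, ⟨g, hbg ▸ (Equiv.swap _ _).bijective, rfl⟩, by simp [g]⟩

end Transversal

theorem exists_surjective_fin [Fintype S] {k : ℕ} (hk : 1 ≤ k) (hkS : k ≤ Fintype.card S) :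
    ∃ b : S → Fin k, b.Surjective := by
  obtain ⟨e⟩ := Function.Embedding.nonempty_of_card_le (α := Fin k) (β := S) (by simpa using hkS)
  have : Nonempty (Fin k) := ⟨⟨0, hk⟩⟩
  exact ⟨Function.invFun e, Function.invFun_surjective e.injective⟩

section Transition

variable [MeasurableSpace S]

noncomputable def transitionMatrix (ν : Measure (S → S)) (i j : S) : ℝ :=
  (ν {f | f i = j}).toReal

variable (ν : Measure (S → S)) [IsProbabilityMeasure ν]

theorem isStochastic_transitionMatrix [Fintype S] [MeasurableSingletonClass S] :
    IsStochastic (transitionMatrix ν) := by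
  refine ⟨fun _ _ => ENNReal.toReal_nonneg, fun i => ?_⟩
  have hmeas : Measurable fun f : S → S => f i := measurable_pi_apply i
  show ∑ j, (ν ((fun f : S → S => f i) ⁻¹' {j})).toReal = 1
  rw [← ENNReal.toReal_sum (fun _ _ => measure_ne_top _ _),
    sum_measure_preimage_singleton Finset.univ fun j _ => hmeas (measurableSet_singleton j)]
  simp

theorem consistent_transitionMatrix [Fintype S] : Consistent (transitionMatrix ν) ν :=
  fun _ _ => (ENNReal.ofReal_toReal (measure_ne_top _ _)).symm

theorem transitionMatrix_pos {f : S → S} (hf : 0 < ν {f}) {i j : S} (hij : f i = j) :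
    0 < transitionMatrix ν i j :=
  ENNReal.toReal_pos (hf.trans_le (measure_mono (by simpa using hij))).ne' (measure_ne_top _ _)

theorem isIID_infinitePi [Finite S] [MeasurableSingletonClass S] :
    IsIID ν (Measure.infinitePi fun _ : ℕ => ν) := by
  intro I g
  have hcyl : {F : ℕ → S → S | ∀ s ∈ I, F s = g s} = Set.pi I fun s => {g s} := by
    ext F
    simp
  rw [hcyl]
  exact Measure.infinitePi_pi _ fun s _ => measurableSet_singleton _

end Transition

section Positive

variable [Fintype S] [DecidableEq S] {P : S → S → ℝ}

theorem irred_of_pos (hP : ∀ i j, 0 < P i j) : Irred P := fun i j =>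
  ⟨1, le_rfl, by simpa using hP i j⟩

theorem aperiodic_of_pos (hP : ∀ i j, 0 < P i j) : Aperiodic P := fun i _ hd =>
  Nat.dvd_one.mp (hd 1 le_rfl (by simpa using hP i i))

end Positive

theorem exists_isProbabilityMeasure_pos_of_finite {α : Type*} [MeasurableSpace α]
    [MeasurableSingletonClass α] {A : Set α} (hA : A.Finite) (hne : A.Nonempty) :
    ∃ ν : Measure α, IsProbabilityMeasure ν ∧ (∀ a ∈ A, 0 < ν {a}) ∧ ν Aᶜ = 0 := by
  let p := PMF.uniformOfFinset hA.toFinset (by simpa using hne)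
  refine ⟨p.toMeasure, inferInstance, fun a ha => ?_, ?_⟩
  · rw [p.toMeasure_apply_singleton a (measurableSet_singleton a)]
    simp [p, ha]
  · rw [p.toMeasure_apply_eq_zero_iff hA.measurableSet.compl]
    simp [p, Set.disjoint_compl_right_iff_subset]

theorem ae_infinitePi_forall_mem {α : Type*} [MeasurableSpace α] (ν : Measure α)
    [IsProbabilityMeasure ν] {A : Set α} (hA : ν Aᶜ = 0) :
    ∀ᵐ F ∂Measure.infinitePi (fun _ : ℕ => ν), ∀ t, F t ∈ A := by
  refine ae_all_iff.mpr fun t => ae_of_ae_map (measurable_pi_apply t).aemeasurable ?_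
  rw [(measurePreserving_eval_infinitePi _ t).map_eq]
  exact hA

theorem stmt10_general [Fintype S] [DecidableEq S]
    [MeasurableSpace S] [DiscreteMeasurableSpace S]
    (n : ℕ) (hcard : Fintype.card S = n)
    (k : ℕ) (hk1 : 1 ≤ k) (hk2 : k ≤ n) :
    ∃ P : S → S → ℝ, IsStochastic P ∧ Irred P ∧ Aperiodic P ∧
      ∃ ν : Measure (S → S), IsProbabilityMeasure ν ∧ Consistent P ν ∧
        ∃ μbar : Measure (ℕ → S → S), IsProbabilityMeasure μbar ∧ IsIID ν μbar ∧
          μbar {F | kF F = k} = 1 := by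
  obtain ⟨b, hb⟩ := exists_surjective_fin (S := S) hk1 (hcard ▸ hk2)
  obtain ⟨i₀⟩ : Nonempty S := Fintype.card_pos_iff.mp (by omega)
  obtain ⟨ν, hν, hpos, hnull⟩ := exists_isProbabilityMeasure_pos_of_finite
    (Set.toFinite {f | IsTransversalMap b f})
    ((exists_isTransversalMap_apply_eq hb i₀ i₀).imp fun _ => And.left)
  have hP : ∀ i j, 0 < transitionMatrix ν i j := fun i j => by
    obtain ⟨f, hf, hfij⟩ := exists_isTransversalMap_apply_eq hb i j
    exact transitionMatrix_pos ν (hpos f hf) hfij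
  refine ⟨transitionMatrix ν, isStochastic_transitionMatrix ν, irred_of_pos hP,
    aperiodic_of_pos hP, ν, hν, consistent_transitionMatrix ν,
    Measure.infinitePi fun _ => ν, inferInstance, isIID_infinitePi ν, ?_⟩
  have hkF : {F | kF F = k} =ᵐ[Measure.infinitePi fun _ : ℕ => ν] (Set.univ : Set _) := by
    refine ae_eq_univ.mpr ?_
    filter_upwards [ae_infinitePi_forall_mem ν hnull] with F hF
    simpa using kF_eq_card_of_isTransversalMap fun t => hF (t + 1)
  rw [measure_congr hkF, measure_univ]

theorem stmt10 [Fintype S] [DecidableEq S]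
    [MeasurableSpace S] [DiscreteMeasurableSpace S]
    (n : ℕ) (hcard : Fintype.card S = n) (hn : 2 ≤ n)
    (k : ℕ) (hk1 : 1 ≤ k) (hk2 : k ≤ n) :
    ∃ P : S → S → ℝ, IsStochastic P ∧ Irred P ∧ Aperiodic P ∧
      ∃ ν : Measure (S → S), IsProbabilityMeasure ν ∧ Consistent P ν ∧
        ∃ μbar : Measure (ℕ → S → S), IsProbabilityMeasure μbar ∧ IsIID ν μbar ∧
          μbar {F | kF F = k} = 1 :=
  stmt10_general n hcard k hk1 hk2

end CFTP
end

section
/- Let S be a finite set with |S| = n ≥ 2 and let P_n be the stochastic matrix on S with all entries equal to 1/n. If μ is a probability measure consistent with P_n that is an 𝒮-block measure for a partition 𝒮 = {S_1, …, S_l} of S, then all blocks have equal size |S_r| = n/l; in particular l divides n. -/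
/-!
Pick representatives `x r ∈ B r`. Almost every `f` permutes the blocks, so for each block `B s`
exactly one representative is mapped into it; hence `∑ r, ν {f | f (x r) ∈ B s} = 1`. Consistency
with the uniform matrix makes every summand equal to `|B s| / n`, so `l * |B s| = n`.
-/

open MeasureTheory

namespace CFTP

variable {S : Type*}

theorem Consistent.measure_apply_mem [Fintype S] [MeasurableSpace S] [MeasurableSingletonClass S]
    {P : S → S → ℝ} {ν : Measure (S → S)} (hcons : Consistent P ν) (i : S) (A : Finset S) :
    ν {f : S → S | f i ∈ A} = ∑ j ∈ A, ENNReal.ofReal (P i j) := by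
  have hunion : {f : S → S | f i ∈ A} = ⋃ j ∈ A, {f : S → S | f i = j} := by
    ext f
    simp
  rw [hunion, measure_biUnion_finset]
  · exact Finset.sum_congr rfl fun j _ => hcons i j
  · exact fun j _ j' _ hjj' => Set.disjoint_left.2 fun f hf hf' => hjj' (hf.symm.trans hf')
  · exact fun j _ => measurableSet_eq_fun (measurable_pi_apply i) measurable_const

theorem ae_mem_supp [Finite S] [MeasurableSpace S] (ν : Measure (S → S)) :
    ∀ᵐ f ∂ν, f ∈ supp ν :=
  ae_iff_of_countable.2 fun _ hf => pos_iff_ne_zero.2 hf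

theorem sum_measure_eq_measure_univ_of_ae_existsUnique {α ι : Type*} [MeasurableSpace α]
    [Fintype ι] (μ : Measure α) {E : ι → Set α} (hE : ∀ i, MeasurableSet (E i))
    (hunique : ∀ᵐ x ∂μ, ∃! i, x ∈ E i) :
    ∑ i, μ (E i) = μ Set.univ := by
  have hcount : ∀ᵐ x ∂μ, ∑ i, (E i).indicator 1 x = (1 : ENNReal) := by
    filter_upwards [hunique] with x ⟨i, hi, huniq⟩
    rw [Finset.sum_eq_single i (fun j _ hji => Set.indicator_of_notMem (fun hj => hji (huniq j hj)) _)
      (by simp), Set.indicator_of_mem hi, Pi.one_apply]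
  calc ∑ i, μ (E i) = ∑ i, ∫⁻ x, (E i).indicator 1 x ∂μ := by
        simp only [lintegral_indicator_one (hE _)]
    _ = ∫⁻ x, ∑ i, (E i).indicator 1 x ∂μ :=
        (lintegral_finsetSum _ fun i _ => measurable_one.indicator (hE i)).symm
    _ = μ Set.univ := by rw [lintegral_congr_ae hcount, lintegral_one]

theorem existsUnique_apply_mem_of_perm_blocks {l : ℕ} {B : Fin l → Finset S}
    (hdisj : ∀ r s, r ≠ s → Disjoint (B r) (B s)) {x : Fin l → S} (hx : ∀ r, x r ∈ B r)
    {f : S → S} {π : Equiv.Perm (Fin l)} (hπ : ∀ r, ∀ i ∈ B r, f i ∈ B (π r)) (s : Fin l) :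
    ∃! r, f (x r) ∈ B s := by
  refine ⟨π.symm s, by simpa using hπ _ _ (hx (π.symm s)), fun r hr => ?_⟩
  have hπr : π r = s := by
    by_contra hne
    exact Finset.disjoint_left.1 (hdisj _ _ hne) (hπ r _ (hx r)) hr
  simp [← hπr]

theorem eq_of_natCast_mul_ofReal_one_div_eq_one {k n : ℕ}
    (h : (k : ENNReal) * ENNReal.ofReal (1 / n) = 1) : k = n := by
  rcases Nat.eq_zero_or_pos n with rfl | hn
  · simp at h
  rw [one_div, ENNReal.ofReal_inv_of_pos (by exact_mod_cast hn), ENNReal.ofReal_natCast,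
    ← div_eq_mul_inv, ENNReal.div_eq_one_iff (by exact_mod_cast hn.ne') (ENNReal.natCast_ne_top n)] at h
  exact_mod_cast h

theorem stmt18_general [Fintype S]
    [MeasurableSpace S] [DiscreteMeasurableSpace S]
    (n l : ℕ) (hcard : Fintype.card S = n)
    (ν : Measure (S → S)) [IsProbabilityMeasure ν]
    (hcons : Consistent (fun _ _ => (1 : ℝ) / n) ν)
    (B : Fin l → Finset S)
    (hne : ∀ r, (B r).Nonempty)
    (hdisj : ∀ r s, r ≠ s → Disjoint (B r) (B s))
    (hcover : ∀ i : S, ∃ r, i ∈ B r)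
    (hblock : ∀ f ∈ supp ν, ∃ π : Equiv.Perm (Fin l), ∀ r, ∀ i ∈ B r, f i ∈ B (π r)) :
    (∀ r, (B r).card * l = n) ∧ l ∣ n := by
  choose x hx using hne
  have hsize : ∀ s, (B s).card * l = n := by
    intro s
    have hsum := sum_measure_eq_measure_univ_of_ae_existsUnique ν
      (E := fun r => {f : S → S | f (x r) ∈ B s})
      (fun r => (B s).measurableSet.preimage (measurable_pi_apply (x r)))
      (by
        filter_upwards [ae_mem_supp ν] with f hf
        obtain ⟨π, hπ⟩ := hblock f hf
        exact existsUnique_apply_mem_of_perm_blocks hdisj hx hπ s)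
    simp only [hcons.measure_apply_mem, Finset.sum_const, nsmul_eq_mul, Finset.card_univ,
      Fintype.card_fin, measure_univ, ← mul_assoc] at hsum
    rw [mul_comm]
    exact eq_of_natCast_mul_ofReal_one_div_eq_one (by exact_mod_cast hsum)
  refine ⟨hsize, ?_⟩
  rcases isEmpty_or_nonempty S with _ | ⟨⟨i⟩⟩
  · simp [← hcard]
  · obtain ⟨r, -⟩ := hcover i
    exact Dvd.intro_left _ (hsize r)

theorem stmt18 [Fintype S] [DecidableEq S]
    [MeasurableSpace S] [DiscreteMeasurableSpace S]
    (n l : ℕ) (hcard : Fintype.card S = n) (hn : 2 ≤ n)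
    (ν : Measure (S → S)) [IsProbabilityMeasure ν]
    (hcons : Consistent (fun _ _ => (1 : ℝ) / n) ν)
    (B : Fin l → Finset S)
    (hne : ∀ r, (B r).Nonempty)
    (hdisj : ∀ r s, r ≠ s → Disjoint (B r) (B s))
    (hcover : ∀ i : S, ∃ r, i ∈ B r)
    (hblock : ∀ f ∈ supp ν, ∃ π : Equiv.Perm (Fin l), ∀ r, ∀ i ∈ B r, f i ∈ B (π r))
    (μbar : Measure (ℕ → S → S)) [IsProbabilityMeasure μbar] (hiid : IsIID ν μbar)
    (hk : μbar {F | kF F = l} = 1) :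
    (∀ r, (B r).card * l = n) ∧ l ∣ n :=
  stmt18_general n l hcard ν hcons B hne hdisj hcover hblock

end CFTP
end
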